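/- Let K be a compact metric space with a probability measure μ₀. For h ∈ C⁰(K;ℝ) define the probability measure μ_h by dμ_h = e^h dμ₀ / ∫_K e^h dμ₀. Then for all h, g ∈ C⁰(K;ℝ), the total variation distance satisfies ‖μ_h − μ_g‖ ≤ ‖h − g‖_{∞}. -/

import Mathlib

/-!
Put `c = ‖h - g‖`, so that `e^h ≤ e^c e^g` and `e^g ≤ e^c e^h` pointwise. For a measurable set
`A`, write `μ_h(A) = P / (P + Q)` and `μ_g(A) = a / (a + b)` with `P, Q` the integrals of `e^h`
over `A, Aᶜ` and `a, b` those of `e^g`. The bounds `P ≤ e^c a` and `b ≤ e^c Q` already force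
`μ_h(A) - μ_g(A) ≤ (e^c - 1) / (e^c + 1) = tanh (c / 2) ≤ c / 2`, and by symmetry
`|μ_h(A) - μ_g(A)| ≤ c / 2`. The total variation is `ν(S) - ν(Sᶜ)` for `ν = μ_h - μ_g` and a Hahn
set `S`, hence at most `c`.
-/

open MeasureTheory Real

theorem Real.exp_sub_one_div_exp_add_one_le_half {c : ℝ} (hc : 0 ≤ c) :
    (exp c - 1) / (exp c + 1) ≤ c / 2 := by
  set x := (exp c - 1) / (exp c + 1) with hx
  have hden : 0 < exp c + 1 := by positivity
  have hx0 : 0 ≤ x := div_nonneg (by linarith [one_le_exp hc]) hden.le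
  have hx1 : x < 1 := (div_lt_one hden).mpr (by linarith)
  have hlog : log (1 + x) - log (1 - x) = c := by
    rw [← log_div (by linarith) (by linarith)]
    convert log_exp c using 2
    rw [hx]
    field_simp
    ring
  -- `c = 2 ∑ x^(2k+1) / (2k+1)`, a series of nonnegative terms whose first term is `2 x`
  have hsum := hasSum_log_sub_log_of_abs_lt_one (abs_lt.mpr ⟨by linarith, hx1⟩)
  rw [hlog] at hsum
  have hfirst := le_hasSum hsum 0 fun k _ => by positivity
  norm_num at hfirst
  linarith

theorem div_add_sub_div_add_le_of_le_mul {P Q a b s : ℝ} (hP : 0 ≤ P) (hb : 0 ≤ b)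
    (hPQ : 0 < P + Q) (hab : 0 < a + b) (hs : 1 ≤ s) (hPa : P ≤ s * a) (hbQ : b ≤ s * Q) :
    P / (P + Q) - a / (a + b) ≤ (s - 1) / (s + 1) := by
  rw [div_sub_div _ _ hPQ.ne' hab.ne', div_le_div_iff₀ (by positivity) (by positivity)]
  have hδ := sub_nonneg.mpr hPa
  have hε := sub_nonneg.mpr hbQ
  have hs1 := sub_nonneg.mpr hs
  -- with `δ = s a - P`, `ε = s Q - b`, `s` times the slack is
  -- `(s - 1) (P - b)² + (s - 1) (P δ + b ε) + 2 (b δ + P ε + δ ε)`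
  nlinarith [mul_nonneg hs1 (sq_nonneg (P - b)), mul_nonneg (mul_nonneg hs1 hP) hδ,
    mul_nonneg (mul_nonneg hs1 hb) hε, mul_nonneg hb hδ, mul_nonneg hε hP, mul_nonneg hε hδ]

namespace MeasureTheory

variable {α : Type*} [MeasurableSpace α]

theorem SignedMeasure.totalVariation_univ_le (s : SignedMeasure α) {r : ℝ}
    (hs : ∀ A, MeasurableSet A → |s A| ≤ r) :
    s.totalVariation Set.univ ≤ ENNReal.ofReal (2 * r) := by
  obtain ⟨i, hi, hpos, hneg, hposPart, hnegPart⟩ := s.toJordanDecomposition_spec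
  have hreal : s.totalVariation.real Set.univ = s i - s iᶜ := by
    rw [totalVariation, measureReal_add_apply, hposPart, hnegPart,
      toMeasureOfZeroLE_real_apply _ hpos hi .univ,
      toMeasureOfLEZero_real_apply _ hneg hi.compl .univ, Set.inter_univ, Set.inter_univ,
      sub_eq_add_neg]
  rw [← ofReal_measureReal, hreal]
  exact ENNReal.ofReal_le_ofReal (by linarith [abs_le.mp (hs i hi), abs_le.mp (hs iᶜ hi.compl)])

variable {μ : Measure α}

theorem measureReal_tilted_apply (f : α → ℝ) {A : Set α} (hA : MeasurableSet A) :
    (μ.tilted f).real A = (∫ x in A, exp (f x) ∂μ) / ∫ x, exp (f x) ∂μ := by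
  rw [measureReal_def, tilted_apply_eq_ofReal_integral' f hA,
    ENNReal.toReal_ofReal (setIntegral_nonneg hA fun x _ => by positivity), integral_div]

theorem measureReal_tilted_sub_le [NeZero μ] {f g : α → ℝ}
    (hf : Integrable (fun x => exp (f x)) μ) (hg : Integrable (fun x => exp (g x)) μ) {c : ℝ}
    (hfg : ∀ᵐ x ∂μ, |f x - g x| ≤ c) {A : Set α} (hA : MeasurableSet A) :
    (μ.tilted f).real A - (μ.tilted g).real A ≤ (exp c - 1) / (exp c + 1) := by
  obtain ⟨x₀, hx₀⟩ := hfg.exists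
  have hexp_le : ∀ {u v : α → ℝ}, (∀ᵐ x ∂μ, |u x - v x| ≤ c) →
      ∀ᵐ x ∂μ, exp (u x) ≤ exp c * exp (v x) := fun huv => huv.mono fun x hx => by
    rw [← exp_add, exp_le_exp]
    linarith [(abs_le.mp hx).2]
  rw [measureReal_tilted_apply f hA, measureReal_tilted_apply g hA,
    ← integral_add_compl hA hf, ← integral_add_compl hA hg]
  refine div_add_sub_div_add_le_of_le_mul (setIntegral_nonneg hA fun x _ => by positivity)
    (setIntegral_nonneg hA.compl fun x _ => by positivity) ?_ ?_
    (one_le_exp ((abs_nonneg _).trans hx₀)) ?_ ?_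
  · rw [integral_add_compl hA hf]
    exact integral_exp_pos hf
  · rw [integral_add_compl hA hg]
    exact integral_exp_pos hg
  · rw [← integral_const_mul]
    exact setIntegral_mono_ae_restrict hf.integrableOn (hg.integrableOn.const_mul _)
      (ae_restrict_of_ae (hexp_le hfg))
  · rw [← integral_const_mul]
    refine setIntegral_mono_ae_restrict hg.integrableOn (hf.integrableOn.const_mul _)
      (ae_restrict_of_ae (hexp_le (hfg.mono fun x hx => ?_)))
    rwa [abs_sub_comm]

theorem abs_measureReal_tilted_sub_le [NeZero μ] {f g : α → ℝ}
    (hf : Integrable (fun x => exp (f x)) μ) (hg : Integrable (fun x => exp (g x)) μ) {c : ℝ}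
    (hfg : ∀ᵐ x ∂μ, |f x - g x| ≤ c) {A : Set α} (hA : MeasurableSet A) :
    |(μ.tilted f).real A - (μ.tilted g).real A| ≤ c / 2 := by
  obtain ⟨x₀, hx₀⟩ := hfg.exists
  have hgf : ∀ᵐ x ∂μ, |g x - f x| ≤ c := hfg.mono fun x hx => by rwa [abs_sub_comm]
  have hc := exp_sub_one_div_exp_add_one_le_half ((abs_nonneg _).trans hx₀)
  exact abs_sub_le_iff.mpr ⟨(measureReal_tilted_sub_le hf hg hfg hA).trans hc,
    (measureReal_tilted_sub_le hg hf hgf hA).trans hc⟩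

end MeasureTheory

/-- Simon's lemma: on a compact metric space `K` with a probability measure `μ₀`, the
Gibbs measures `dμ_h = e^h dμ₀ / ∫ e^h dμ₀` satisfy
`‖μ_h − μ_g‖ ≤ ‖h − g‖_∞` in total variation, for continuous `h, g`. -/
theorem gibbs_total_variation_bound {K : Type*} [MetricSpace K] [CompactSpace K]
    [MeasurableSpace K] [BorelSpace K]
    (μ0 : Measure K) [IsProbabilityMeasure μ0] (h g : C(K, ℝ))
    (μh μg : Measure K) [IsFiniteMeasure μh] [IsFiniteMeasure μg]
    (hμh : μh = μ0.withDensity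
      (fun x => ENNReal.ofReal (Real.exp (h x) / ∫ y, Real.exp (h y) ∂μ0)))
    (hμg : μg = μ0.withDensity
      (fun x => ENNReal.ofReal (Real.exp (g x) / ∫ y, Real.exp (g y) ∂μ0))) :
    (μh.toSignedMeasure - μg.toSignedMeasure).totalVariation Set.univ
      ≤ ENNReal.ofReal ‖h - g‖ := by
  have hexp_int (f : C(K, ℝ)) : Integrable (fun x => exp (f x)) μ0 :=
    (by fun_prop : Continuous fun x => exp (f x)).integrable_of_hasCompactSupport
      (HasCompactSupport.of_compactSpace _)
  have hμh' : μh = μ0.tilted h := hμh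
  have hμg' : μg = μ0.tilted g := hμg
  have hdist : ∀ᵐ x ∂μ0, |h x - g x| ≤ ‖h - g‖ :=
    ae_of_all _ fun x => (h - g).norm_coe_le_norm x
  have hbound := (μh.toSignedMeasure - μg.toSignedMeasure).totalVariation_univ_le fun A hA => by
    rw [Measure.toSignedMeasure_sub_apply hA, hμh', hμg']
    exact abs_measureReal_tilted_sub_le (hexp_int h) (hexp_int g) hdist hA
  rwa [mul_div_cancel₀ _ two_ne_zero] at hbound
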